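/- arXiv:0808.2998 — 2 statements merged into one kernel-verified Lean document; each statement's English description precedes it below -/
import Mathlib

section
/- Let k have characteristic 2, G = Sp(2n,k) acting on g* = sp(2n)* by (g·ξ)(x) = ξ(Ad(g)⁻¹x). Two elements ξ, ζ ∈ g* lie in the same G-orbit if and only if there exists g ∈ Sp(2n,k) such that α_ξ(g⁻¹v) = α_ζ(v) for all v ∈ V, where α_ξ(v) = β(v, X_ξ v) for any X_ξ representing ξ via the trace form. -/
/-!
Through the trace pairing, `g • ξ = ζ` says that `tr ((g X_ξ g⁻¹ - X_ζ) x) = 0` for all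
`x ∈ sp(2n)`. In characteristic 2, `x ↦ x S` identifies `sp(2n)` with the symmetric matrices,
and a matrix `P` is trace-orthogonal to all symmetric matrices exactly when it is alternating,
i.e. exactly when its quadratic form `v ↦ vᵀ P v` vanishes. For `P = S (g X_ξ g⁻¹ - X_ζ)` that
quadratic form is `α_ξ (g⁻¹ v) - α_ζ v`, so the two conditions agree for every fixed `g`.
-/

open Matrix

namespace Matrix

variable {ι R : Type*} [CommRing R]

theorem isSymm_vecMulVec_self (v : ι → R) : (vecMulVec v v).IsSymm :=
  IsSymm.ext fun i j => by simp only [vecMulVec_apply, mul_comm]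

theorem exists_eq_sub_transpose_of_alternating [LinearOrder ι] {P : Matrix ι ι R}
    (hdiag : ∀ i, P i i = 0) (hanti : ∀ i j, P i j + P j i = 0) :
    ∃ C : Matrix ι ι R, P = C - Cᵀ := by
  refine ⟨of fun i j => if i < j then P i j else 0, ?_⟩
  ext i j
  rcases lt_trichotomy i j with h | rfl | h
  · simp [h, h.not_gt]
  · simp [hdiag]
  · simp [h, h.not_gt, eq_neg_of_add_eq_zero_left (hanti i j)]

variable [Fintype ι]

theorem dotProduct_mulVec_self_eq_trace (P : Matrix ι ι R) (v : ι → R) :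
    v ⬝ᵥ P *ᵥ v = (P * vecMulVec v v).trace := by
  rw [mul_vecMulVec, trace_vecMulVec, dotProduct_comm]

theorem trace_mul_eq_zero_of_alternating_of_isSymm {P m : Matrix ι ι R}
    (hdiag : ∀ i, P i i = 0) (hanti : ∀ i j, P i j + P j i = 0) (hm : m.IsSymm) :
    (P * m).trace = 0 := by
  let : LinearOrder ι := LinearOrder.lift' _ (Fintype.equivFin ι).injective
  obtain ⟨C, rfl⟩ := exists_eq_sub_transpose_of_alternating hdiag hanti
  have hCt : (Cᵀ * m).trace = (C * m).trace := by
    rw [← trace_transpose_mul, transpose_transpose, hm.eq, trace_mul_comm]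
  rw [sub_mul, trace_sub, hCt, sub_self]

variable [DecidableEq ι]

theorem alternating_of_forall_dotProduct_mulVec_self_eq_zero {P : Matrix ι ι R}
    (h : ∀ v, v ⬝ᵥ P *ᵥ v = 0) : (∀ i, P i i = 0) ∧ ∀ i j, P i j + P j i = 0 := by
  have hdiag : ∀ i, P i i = 0 := fun i => by
    simpa [mulVec_single, single_dotProduct] using h (Pi.single i 1)
  refine ⟨hdiag, fun i j => ?_⟩
  have hsum := h (Pi.single i 1 + Pi.single j 1)
  simpa [mulVec_add, mulVec_single, dotProduct_add, add_dotProduct, single_dotProduct, hdiag,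
    add_comm] using hsum

theorem forall_isSymm_trace_mul_eq_zero_iff (P : Matrix ι ι R) :
    (∀ m : Matrix ι ι R, m.IsSymm → (P * m).trace = 0) ↔ ∀ v, v ⬝ᵥ P *ᵥ v = 0 := by
  refine ⟨fun h v => ?_, fun h m hm => ?_⟩
  · rw [dotProduct_mulVec_self_eq_trace]
    exact h _ (isSymm_vecMulVec_self v)
  · obtain ⟨hdiag, hanti⟩ := alternating_of_forall_dotProduct_mulVec_self_eq_zero h
    exact trace_mul_eq_zero_of_alternating_of_isSymm hdiag hanti hm

variable {S : Matrix ι ι R}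

theorem inv_eq_of_transpose_mul_mul_eq (hSS : S * S = 1) {g : Matrix ι ι R}
    (hg : gᵀ * S * g = S) : g⁻¹ = S * gᵀ * S :=
  inv_eq_left_inv <| by simp only [Matrix.mul_assoc]; rw [← Matrix.mul_assoc gᵀ, hg, hSS]

theorem dotProduct_mulVec_inv_mulVec (hSt : Sᵀ = S) (hSS : S * S = 1) {g : Matrix ι ι R}
    (hg : gᵀ * S * g = S) (X : Matrix ι ι R) (v : ι → R) :
    g⁻¹ *ᵥ v ⬝ᵥ (S * X) *ᵥ (g⁻¹ *ᵥ v) = v ⬝ᵥ (S * (g * X * g⁻¹)) *ᵥ v := by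
  have hSg : g⁻¹ᵀ * S = S * g := by
    rw [inv_eq_of_transpose_mul_mul_eq hSS hg, transpose_mul, transpose_mul, hSt,
      transpose_transpose, Matrix.mul_assoc, Matrix.mul_assoc, hSS, Matrix.mul_one]
  rw [mulVec_mulVec, dotProduct_mulVec, vecMul_mulVec, ← dotProduct_mulVec]
  simp only [← Matrix.mul_assoc, hSg]

variable [CharP R 2]

theorem isSymm_mul_iff_transpose_mul_add_mul_eq_zero (hSt : Sᵀ = S) (hSS : S * S = 1)
    (x : Matrix ι ι R) : (x * S).IsSymm ↔ xᵀ * S + S * x = 0 := by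
  have hchar2 : xᵀ * S + S * x = 0 ↔ xᵀ * S = S * x := by
    simp only [← Matrix.ext_iff, add_apply, zero_apply, CharTwo.add_eq_zero]
  rw [IsSymm, transpose_mul, hSt, hchar2]
  constructor <;> intro h
  · calc xᵀ * S = S * (S * xᵀ) * S := by simp only [← Matrix.mul_assoc, hSS, Matrix.one_mul]
      _ = S * x := by rw [h, ← Matrix.mul_assoc, Matrix.mul_assoc, hSS, Matrix.mul_one]
  · calc S * xᵀ = S * (xᵀ * S) * S := by simp only [Matrix.mul_assoc, hSS, Matrix.mul_one]
      _ = x * S := by rw [h, ← Matrix.mul_assoc, hSS, Matrix.one_mul]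

theorem forall_sp_trace_mul_eq_zero_iff (hSt : Sᵀ = S) (hSS : S * S = 1) (A : Matrix ι ι R) :
    (∀ x : Matrix ι ι R, xᵀ * S + S * x = 0 → (A * x).trace = 0) ↔
      ∀ m : Matrix ι ι R, m.IsSymm → (S * A * m).trace = 0 := by
  have hcycle (m : Matrix ι ι R) : (A * (m * S)).trace = (S * A * m).trace := by
    rw [trace_mul_cycle', Matrix.mul_assoc]
  refine ⟨fun h m hm => ?_, fun h x hx => ?_⟩
  · rw [← hcycle]
    exact h _ <| (isSymm_mul_iff_transpose_mul_add_mul_eq_zero hSt hSS _).1 <| by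
      rwa [Matrix.mul_assoc, hSS, Matrix.mul_one]
  · rw [← Matrix.mul_one x, ← hSS, ← Matrix.mul_assoc x, hcycle]
    exact h _ <| (isSymm_mul_iff_transpose_mul_add_mul_eq_zero hSt hSS x).2 hx

end Matrix

/-- characteristic 2, `G = Sp(2n) = {g : gᵀSg = S}` acting on `sp(2n)*` by
`(g·ξ)(x) = ξ(g⁻¹xg)`.  Two functionals, represented by matrices `Xξ, Xζ` via the trace
pairing, lie in the same `G`-orbit iff there is `g ∈ Sp(2n)` with
`α_ξ(g⁻¹v) = α_ζ(v)` for all `v`, where `α_ξ(v) = β(v, Xξ v) = vᵀSXξv`. -/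
theorem sp_dual_same_orbit_iff_quadratic_forms_match
    {k : Type*} [Field k] [CharP k 2] (n : ℕ)
    (S : Matrix (Fin n ⊕ Fin n) (Fin n ⊕ Fin n) k)
    (hS : S = Matrix.fromBlocks 0 1 1 0)
    (Xξ Xζ : Matrix (Fin n ⊕ Fin n) (Fin n ⊕ Fin n) k) :
    (∃ g : Matrix (Fin n ⊕ Fin n) (Fin n ⊕ Fin n) k, gᵀ * S * g = S ∧
        ∀ x : Matrix (Fin n ⊕ Fin n) (Fin n ⊕ Fin n) k, xᵀ * S + S * x = 0 →
          (Xξ * (g⁻¹ * x * g)).trace = (Xζ * x).trace) ↔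
    (∃ g : Matrix (Fin n ⊕ Fin n) (Fin n ⊕ Fin n) k, gᵀ * S * g = S ∧
        ∀ v : Fin n ⊕ Fin n → k,
          (g⁻¹.mulVec v) ⬝ᵥ ((S * Xξ).mulVec (g⁻¹.mulVec v)) =
            v ⬝ᵥ ((S * Xζ).mulVec v)) := by
  have hSt : Sᵀ = S := by
    rw [hS, fromBlocks_transpose]
    simp
  have hSS : S * S = 1 := by
    rw [hS, fromBlocks_multiply]
    simp [← fromBlocks_one]
  refine exists_congr fun g => and_congr_right fun hg => ?_
  calc _ ↔ ∀ x, xᵀ * S + S * x = 0 → ((g * Xξ * g⁻¹ - Xζ) * x).trace = 0 := by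
        refine forall₂_congr fun x _ => ?_
        rw [sub_mul, trace_sub, sub_eq_zero, Matrix.mul_assoc g, Matrix.mul_assoc g,
          trace_mul_comm g]
        simp only [Matrix.mul_assoc]
    _ ↔ ∀ m : Matrix (Fin n ⊕ Fin n) (Fin n ⊕ Fin n) k, m.IsSymm →
          (S * (g * Xξ * g⁻¹ - Xζ) * m).trace = 0 :=
        forall_sp_trace_mul_eq_zero_iff hSt hSS _
    _ ↔ ∀ v, v ⬝ᵥ (S * (g * Xξ * g⁻¹ - Xζ)) *ᵥ v = 0 := forall_isSymm_trace_mul_eq_zero_iff _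
    _ ↔ _ := forall_congr' fun v => by
        rw [dotProduct_mulVec_inv_mulVec hSt hSS hg, mul_sub, sub_mulVec, dotProduct_sub,
          sub_eq_zero]
end

section
/- The number of pairs of partitions (ν, μ) with ν = (ν₀, ν₁, …, ν_s), μ = (μ₁, …, μ_s), |ν| + |μ| = n, and ν_i ≤ μ_i for all 1 ≤ i ≤ s, equals p₂(n) − p₂(n−2). -/
/-- A partition encoded as a weakly decreasing function `ℕ → ℕ` with finitely many
nonzero parts (zero-padded). -/
def IsPartitionFun (f : ℕ → ℕ) : Prop :=
  Antitone f ∧ ∃ N, ∀ i, N ≤ i → f i = 0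

/-- `p₂ m` = number of pairs of partitions of total size `m`. -/
noncomputable def numPartitionPairs (m : ℕ) : ℕ :=
  Nat.card {p : (ℕ → ℕ) × (ℕ → ℕ) //
    IsPartitionFun p.1 ∧ IsPartitionFun p.2 ∧
      (∑ᶠ i, p.1 i) + (∑ᶠ i, p.2 i) = m}

/-!
A pair `p` stands for `(ν, μ)` with `p.1 i = νᵢ` and `p.2 i = μ_{i+1}`, so the condition
`νᵢ ≤ μᵢ` reads `p.1 (i + 1) ≤ p.2 i`. The pairs of size `n` violating it are in bijection with
all pairs of size `n - 2`: at the first violation `k` (`μ_{k+1} < ν_{k+1}`), lower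
`ν₀, …, ν_{k+1}` by one, raise `μ₁, …, μ_k` by one and exchange the tails, so that `ν` continues
with `μ_{k+1}, μ_{k+2}, …` and `μ` with `ν_{k+2}, ν_{k+3}, …`. This removes two cells and
yields a pair of partitions; the inverse cuts at the first `k` with `μ_{k+1} ≤ ν_{k+1} + 1`.
-/

open Finset Function

theorem Nat.sInf_setOf_eq {P : ℕ → Prop} {k : ℕ} (hk : P k) (hlt : ∀ i < k, ¬ P i) :
    sInf {i | P i} = k :=
  IsLeast.csInf_eq ⟨hk, fun i hi => le_of_not_gt fun h => hlt i h hi⟩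

theorem finsum_nat_eq_add_finsum_succ {M : Type*} [AddCommMonoid M] {f : ℕ → M}
    (hf : f.HasFiniteSupport) : ∑ᶠ n, f n = f 0 + ∑ᶠ n, f (n + 1) := by
  have he : Bijective fun o : Option ℕ => o.elim 0 (· + 1) :=
    ⟨fun a b h => by cases a <;> cases b <;> simp_all,
      fun n => by cases n with
        | zero => exact ⟨none, rfl⟩
        | succ n => exact ⟨some n, rfl⟩⟩
  have hf₁ : (fun n => f (n + 1)).HasFiniteSupport := hf.comp_of_injective (add_left_injective 1)
  rw [← finsum_comp _ he, finsum_option hf₁]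
  rfl

theorem finsum_add_finsum_eq_add_finsum_add_two {M : Type*} [AddCommMonoid M] {a b : ℕ → M}
    (ha : a.HasFiniteSupport) (hb : b.HasFiniteSupport) :
    ∑ᶠ i, a i + ∑ᶠ i, b i = a 0 + a 1 + ∑ᶠ i, (a (i + 2) + b i) := by
  have ha₁ : (fun i => a (i + 1)).HasFiniteSupport := ha.comp_of_injective (add_left_injective 1)
  have ha₂ : (fun i => a (i + 2)).HasFiniteSupport := ha.comp_of_injective (add_left_injective 2)
  rw [finsum_add_distrib ha₂ hb, finsum_nat_eq_add_finsum_succ ha,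
    finsum_nat_eq_add_finsum_succ ha₁]
  simp only [add_assoc]

theorem Set.finite_setOf_forall_le_and_eventually_zero (B N : ℕ) :
    {f : ℕ → ℕ | (∀ i, f i ≤ B) ∧ ∀ i, N ≤ i → f i = 0}.Finite := by
  refine Set.Finite.of_finite_image (f := fun f (i : Fin N) => f i) ?_ ?_
  · refine (Set.Finite.pi fun _ => Set.finite_Iic B).subset ?_
    rintro _ ⟨f, hf, rfl⟩ i -
    exact hf.1 i
  · intro f hf g hg hfg
    funext i
    by_cases hi : i < N
    · exact congrFun hfg ⟨i, hi⟩
    · rw [hf.2 i (by omega), hg.2 i (by omega)]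

namespace IsPartitionFun

variable {f : ℕ → ℕ}

theorem hasFiniteSupport (hf : IsPartitionFun f) : f.HasFiniteSupport := by
  obtain ⟨N, hN⟩ := hf.2
  refine (Set.finite_Iio N).subset fun i hi => ?_
  by_contra h
  exact hi (hN i (not_lt.1 h))

theorem succ_mul_le_finsum (hf : IsPartitionFun f) (i : ℕ) : (i + 1) * f i ≤ ∑ᶠ j, f j := by
  obtain ⟨N, hN⟩ := hf.2
  have hsupp : support f ⊆ ↑(range (max N (i + 1))) := fun j hj => by
    by_contra h
    simp only [coe_range, Set.mem_Iio, not_lt, sup_le_iff] at h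
    exact hj (hN j h.1)
  rw [finsum_eq_sum_of_support_subset f hsupp]
  calc (i + 1) * f i = ∑ _j ∈ range (i + 1), f i := by simp
    _ ≤ ∑ j ∈ range (i + 1), f j :=
      sum_le_sum fun j hj => hf.1 (by simpa [Nat.lt_succ_iff] using hj)
    _ ≤ _ := sum_le_sum_of_subset (range_subset_range.2 (le_max_right _ _))

theorem le_finsum (hf : IsPartitionFun f) (i : ℕ) : f i ≤ ∑ᶠ j, f j :=
  (Nat.le_mul_of_pos_left _ i.succ_pos).trans (hf.succ_mul_le_finsum i)

theorem eq_zero_of_finsum_le (hf : IsPartitionFun f) {i : ℕ} (hi : ∑ᶠ j, f j ≤ i) : f i = 0 := by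
  by_contra h
  have := hf.succ_mul_le_finsum i
  have := Nat.le_mul_of_pos_right (i + 1) (Nat.pos_of_ne_zero h)
  omega

end IsPartitionFun

namespace PartitionPair

abbrev Pair := (ℕ → ℕ) × (ℕ → ℕ)

noncomputable def size (p : Pair) : ℕ := ∑ᶠ i, p.1 i + ∑ᶠ i, p.2 i

def ofSize (n : ℕ) : Set Pair :=
  {p | IsPartitionFun p.1 ∧ IsPartitionFun p.2 ∧ size p = n}

def Interlaced (p : Pair) : Prop := ∀ i, p.1 (i + 1) ≤ p.2 i

theorem numPartitionPairs_eq_ncard (n : ℕ) : numPartitionPairs n = (ofSize n).ncard := rfl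

theorem finite_ofSize (n : ℕ) : (ofSize n).Finite := by
  refine ((Set.finite_setOf_forall_le_and_eventually_zero n n).prod
    (Set.finite_setOf_forall_le_and_eventually_zero n n)).subset ?_
  rintro p ⟨h₁, h₂, hn⟩
  unfold size at hn
  exact ⟨⟨fun i => by have := h₁.le_finsum i; omega,
      fun i hi => h₁.eq_zero_of_finsum_le (by omega)⟩,
    ⟨fun i => by have := h₂.le_finsum i; omega,
      fun i hi => h₂.eq_zero_of_finsum_le (by omega)⟩⟩

section Splice

variable {k : ℕ} {h t : Pair}

def splice (k : ℕ) (h t : Pair) : Pair :=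
  (fun i => if i ≤ k + 1 then h.1 i else t.2 (i - 2),
   fun i => if i < k then h.2 i else t.1 (i + 2))

theorem isPartitionFun_splice_fst (hh : Antitone h.1) (ht : IsPartitionFun t.2)
    (hk : t.2 k ≤ h.1 (k + 1)) : IsPartitionFun (splice k h t).1 := by
  refine ⟨antitone_nat_of_succ_le fun i => ?_, ?_⟩
  · rcases lt_trichotomy i (k + 1) with hi | rfl | hi
    · simp only [splice, if_pos hi.le, if_pos (show i + 1 ≤ k + 1 by omega)]
      exact hh i.le_succ
    · simpa [splice] using hk
    · simp only [splice, if_neg (show ¬ i ≤ k + 1 by omega),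
        if_neg (show ¬ i + 1 ≤ k + 1 by omega)]
      exact ht.1 (by omega)
  · obtain ⟨N, hN⟩ := ht.2
    exact ⟨N + k + 2, fun i hi => by
      simp only [splice, if_neg (show ¬ i ≤ k + 1 by omega)]
      exact hN _ (by omega)⟩

theorem isPartitionFun_splice_snd (hh : Antitone h.2) (ht : IsPartitionFun t.1)
    (hk : ∀ i < k, t.1 (k + 2) ≤ h.2 i) : IsPartitionFun (splice k h t).2 := by
  refine ⟨antitone_nat_of_succ_le fun i => ?_, ?_⟩
  · rcases lt_trichotomy (i + 1) k with hi | rfl | hi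
    · simp only [splice, if_pos hi, if_pos (show i < k by omega)]
      exact hh i.le_succ
    · simpa [splice] using hk i i.lt_succ_self
    · simp only [splice, if_neg (show ¬ i < k by omega), if_neg (show ¬ i + 1 < k by omega)]
      exact ht.1 (by omega)
  · obtain ⟨N, hN⟩ := ht.2
    exact ⟨N + k, fun i hi => by
      simp only [splice, if_neg (show ¬ i < k by omega)]
      exact hN _ (by omega)⟩

-- Pairing `ν_{i+2}` with `μ_{i+1}` makes the exchange of tails invisible in the sum.
theorem size_splice_add (hs₁ : (splice k h t).1.HasFiniteSupport)
    (hs₂ : (splice k h t).2.HasFiniteSupport) (ht₁ : t.1.HasFiniteSupport)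
    (ht₂ : t.2.HasFiniteSupport) (hh : ∀ i < k, h.1 (i + 2) + h.2 i = t.1 (i + 2) + t.2 i) :
    size (splice k h t) + (t.1 0 + t.1 1) = size t + (h.1 0 + h.1 1) := by
  have hcross : ∀ i, (splice k h t).1 (i + 2) + (splice k h t).2 i = t.1 (i + 2) + t.2 i := by
    intro i
    by_cases hi : i < k
    · simp only [splice, if_pos (show i + 2 ≤ k + 1 by omega), if_pos hi, hh i hi]
    · simp only [splice, if_neg (show ¬ i + 2 ≤ k + 1 by omega), if_neg hi, Nat.add_sub_cancel]
      exact add_comm _ _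
  unfold size
  rw [finsum_add_finsum_eq_add_finsum_add_two hs₁ hs₂,
    finsum_add_finsum_eq_add_finsum_add_two ht₁ ht₂, finsum_congr hcross]
  simp only [splice, if_pos (show 0 ≤ k + 1 by omega), if_pos (show 1 ≤ k + 1 by omega)]
  ring

theorem splice_splice_of_eqOn {h' : Pair} (h₁ : ∀ i ≤ k + 1, h'.1 i = t.1 i)
    (h₂ : ∀ i < k, h'.2 i = t.2 i) : splice k h' (splice k h t) = t := by
  ext i
  · by_cases hi : i ≤ k + 1
    · simp [splice, hi, h₁ i hi]
    · simp [splice, hi, show ¬ i - 2 < k by omega, show i - 2 + 2 = i by omega]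
  · by_cases hi : i < k
    · simp [splice, hi, h₂ i hi]
    · simp [splice, hi]

end Splice

variable {k : ℕ} {p : Pair}

def crossDown (k : ℕ) (p : Pair) : Pair := splice k (fun i => p.1 i - 1, fun i => p.2 i + 1) p

def crossUp (k : ℕ) (p : Pair) : Pair := splice k (fun i => p.1 i + 1, fun i => p.2 i - 1) p

theorem crossDown_mem_ofSize {n : ℕ} (hp : p ∈ ofSize (n + 2)) (hk : p.2 k < p.1 (k + 1))
    (hlt : ∀ i < k, p.1 (i + 1) ≤ p.2 i) : crossDown k p ∈ ofSize n := by
  obtain ⟨h₁, h₂, hsize⟩ := hp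
  have hpos : ∀ i ≤ k + 1, 1 ≤ p.1 i := fun i hi => by have := h₁.1 hi; omega
  have hq₁ : IsPartitionFun (crossDown k p).1 :=
    isPartitionFun_splice_fst (fun a b hab => tsub_le_tsub_right (h₁.1 hab) 1) h₂
      (by simp only; omega)
  have hq₂ : IsPartitionFun (crossDown k p).2 :=
    isPartitionFun_splice_snd (fun a b hab => Nat.add_le_add_right (h₂.1 hab) 1) h₁
      fun i hi => by
        have := hlt i hi; have := h₁.1 (show i + 1 ≤ k + 2 by omega); simp only; omega
  refine ⟨hq₁, hq₂, ?_⟩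
  have hs := size_splice_add hq₁.hasFiniteSupport hq₂.hasFiniteSupport h₁.hasFiniteSupport
    h₂.hasFiniteSupport (h := (fun i => p.1 i - 1, fun i => p.2 i + 1)) fun i hi => by
      have := hpos (i + 2) (by omega); simp only; omega
  have := hpos 0 (by omega)
  have := hpos 1 (by omega)
  simp only at hs
  unfold crossDown
  omega

theorem crossUp_mem_ofSize {n : ℕ} (hp : p ∈ ofSize n) (hk : p.2 k ≤ p.1 (k + 1) + 1)
    (hlt : ∀ i < k, p.1 (i + 1) + 2 ≤ p.2 i) : crossUp k p ∈ ofSize (n + 2) := by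
  obtain ⟨h₁, h₂, hsize⟩ := hp
  have hq₁ : IsPartitionFun (crossUp k p).1 :=
    isPartitionFun_splice_fst (fun a b hab => Nat.add_le_add_right (h₁.1 hab) 1) h₂ hk
  have hq₂ : IsPartitionFun (crossUp k p).2 :=
    isPartitionFun_splice_snd (fun a b hab => tsub_le_tsub_right (h₂.1 hab) 1) h₁
      fun i hi => by
        have := hlt i hi; have := h₁.1 (show i + 1 ≤ k + 2 by omega); simp only; omega
  refine ⟨hq₁, hq₂, ?_⟩
  have hs := size_splice_add hq₁.hasFiniteSupport hq₂.hasFiniteSupport h₁.hasFiniteSupport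
    h₂.hasFiniteSupport (h := (fun i => p.1 i + 1, fun i => p.2 i - 1)) fun i hi => by
      have := hlt i hi; simp only; omega
  simp only at hs
  unfold crossUp
  omega

theorem crossUp_crossDown (h₁ : Antitone p.1) (hk : p.2 k < p.1 (k + 1)) :
    crossUp k (crossDown k p) = p :=
  splice_splice_of_eqOn
    (fun i hi => by have := h₁ hi; simp only [crossDown, splice, hi, ↓reduceIte]; omega)
    fun i hi => by simp [crossDown, splice, hi]

theorem crossDown_crossUp (hlt : ∀ i < k, p.1 (i + 1) + 2 ≤ p.2 i) :
    crossDown k (crossUp k p) = p :=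
  splice_splice_of_eqOn (fun i hi => by simp [crossUp, splice, hi])
    fun i hi => by have := hlt i hi; simp only [crossUp, splice, hi, ↓reduceIte]; omega

noncomputable def firstViolation (p : Pair) : ℕ := sInf {i | p.2 i < p.1 (i + 1)}

noncomputable def firstSmallGap (p : Pair) : ℕ := sInf {i | p.2 i ≤ p.1 (i + 1) + 1}

theorem firstViolation_spec (hp : ¬ Interlaced p) :
    p.2 (firstViolation p) < p.1 (firstViolation p + 1) ∧
      ∀ i < firstViolation p, p.1 (i + 1) ≤ p.2 i := by
  simp only [Interlaced, not_forall, not_le] at hp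
  exact ⟨Nat.sInf_mem hp, fun i hi => by simpa using Nat.notMem_of_lt_sInf hi⟩

theorem firstSmallGap_spec (hp : IsPartitionFun p.2) :
    p.2 (firstSmallGap p) ≤ p.1 (firstSmallGap p + 1) + 1 ∧
      ∀ i < firstSmallGap p, p.1 (i + 1) + 2 ≤ p.2 i := by
  obtain ⟨N, hN⟩ := hp.2
  have hne : {i | p.2 i ≤ p.1 (i + 1) + 1}.Nonempty := ⟨N, by simp [hN N le_rfl]⟩
  refine ⟨Nat.sInf_mem hne, fun i hi => ?_⟩
  have := Nat.notMem_of_lt_sInf hi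
  simp only [Set.mem_ofPred_eq, not_le] at this
  omega

theorem firstSmallGap_crossDown (h₁ : Antitone p.1) (hk : p.2 k < p.1 (k + 1))
    (hlt : ∀ i < k, p.1 (i + 1) ≤ p.2 i) : firstSmallGap (crossDown k p) = k := by
  refine Nat.sInf_setOf_eq ?_ fun i hi => ?_
  · have := h₁ (show k + 1 ≤ k + 2 by omega)
    simp only [crossDown, splice, lt_self_iff_false, le_refl, ↓reduceIte]
    omega
  · have := hlt i hi
    have := h₁ (show i + 1 ≤ k + 1 by omega)
    simp only [crossDown, splice, hi, hi.le, add_le_add_iff_right, ↓reduceIte, not_le]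
    omega

theorem firstViolation_crossUp (h₁ : Antitone p.1) (hlt : ∀ i < k, p.1 (i + 1) + 2 ≤ p.2 i) :
    firstViolation (crossUp k p) = k := by
  refine Nat.sInf_setOf_eq ?_ fun i hi => ?_
  · have := h₁ (show k + 1 ≤ k + 2 by omega)
    simp only [crossUp, splice, lt_self_iff_false, le_refl, ↓reduceIte]
    omega
  · have := hlt i hi
    simp only [crossUp, splice, hi, hi.le, add_le_add_iff_right, ↓reduceIte, not_lt]
    omega

theorem not_interlaced_crossUp (h₁ : Antitone p.1) : ¬ Interlaced (crossUp k p) := fun h => by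
  have hk := h k
  simp only [crossUp, splice, lt_self_iff_false, le_refl, ↓reduceIte] at hk
  have := h₁ (show k + 1 ≤ k + 2 by omega)
  omega

theorem two_le_of_mem_ofSize_of_not_interlaced {n : ℕ} (hp : p ∈ ofSize n)
    (hbad : ¬ Interlaced p) : 2 ≤ n := by
  obtain ⟨h₁, -, hsize⟩ := hp
  obtain ⟨hk, -⟩ := firstViolation_spec hbad
  have := h₁.succ_mul_le_finsum 1
  have := h₁.1 (show 1 ≤ firstViolation p + 1 by omega)
  unfold size at hsize
  omega

theorem bijOn_crossDown_firstViolation (n : ℕ) :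
    Set.BijOn (fun p => crossDown (firstViolation p) p)
      (ofSize (n + 2) \ {p | Interlaced p}) (ofSize n) := by
  refine Set.InvOn.bijOn (f' := fun p => crossUp (firstSmallGap p) p) ⟨?_, ?_⟩ ?_ ?_
  · rintro p ⟨hp, hbad⟩
    obtain ⟨hk, hlt⟩ := firstViolation_spec hbad
    simp only [firstSmallGap_crossDown hp.1.1 hk hlt, crossUp_crossDown hp.1.1 hk]
  · rintro p hp
    obtain ⟨-, hlt⟩ := firstSmallGap_spec hp.2.1
    simp only [firstViolation_crossUp hp.1.1 hlt, crossDown_crossUp hlt]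
  · rintro p ⟨hp, hbad⟩
    obtain ⟨hk, hlt⟩ := firstViolation_spec hbad
    exact crossDown_mem_ofSize hp hk hlt
  · rintro p hp
    obtain ⟨hk, hlt⟩ := firstSmallGap_spec hp.2.1
    exact ⟨crossUp_mem_ofSize hp hk hlt, not_interlaced_crossUp hp.1.1⟩

theorem ncard_ofSize_sdiff_interlaced (n : ℕ) :
    (ofSize n \ {p | Interlaced p}).ncard = if 2 ≤ n then numPartitionPairs (n - 2) else 0 := by
  split_ifs with hn
  · obtain ⟨m, rfl⟩ := Nat.exists_eq_add_of_le' hn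
    exact (bijOn_crossDown_firstViolation m).ncard_eq
  · have hempty : ofSize n \ {p | Interlaced p} = ∅ := Set.eq_empty_of_forall_notMem
      fun p hp => hn (two_le_of_mem_ofSize_of_not_interlaced hp.1 hp.2)
    rw [hempty, Set.ncard_empty]

end PartitionPair

/-- the number of pairs of partitions `(ν,μ)`,
`ν = (ν₀,ν₁,…)`, `μ = (μ₁,μ₂,…)` (here `p.1 i = νᵢ` and `p.2 i = μ_{i+1}`),
with `|ν| + |μ| = n` and `νᵢ ≤ μᵢ` for all `i ≥ 1`, equals `p₂(n) − p₂(n−2)`. -/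
theorem card_partition_pairs_nu_le_mu_shifted (n : ℕ) :
    Nat.card {p : (ℕ → ℕ) × (ℕ → ℕ) //
        IsPartitionFun p.1 ∧ IsPartitionFun p.2 ∧
        (∑ᶠ i, p.1 i) + (∑ᶠ i, p.2 i) = n ∧
        ∀ i, p.1 (i + 1) ≤ p.2 i} =
      numPartitionPairs n - (if 2 ≤ n then numPartitionPairs (n - 2) else 0) := by
  open PartitionPair in
  rw [numPartitionPairs_eq_ncard,
    ← Set.ncard_inter_add_ncard_sdiff_eq_ncard _ {p | Interlaced p} (finite_ofSize n),
    ncard_ofSize_sdiff_interlaced, Nat.add_sub_cancel, ← Nat.card_coe_set_eq]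
  exact Nat.card_congr (Equiv.subtypeEquivRight fun p => by
    simp only [Set.mem_inter_iff, Set.mem_ofPred_eq, PartitionPair.ofSize, PartitionPair.size,
      PartitionPair.Interlaced, and_assoc])
end
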